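/- arXiv:2502.19947 — 3 statements merged into one kernel-verified Lean document; each statement's English description precedes it below -/
import Mathlib

section
/- Consider the explicit finite volume scheme h_i (U_i^{n+1} − 2U_i^n + U_i^{n−1})/Δt² − [ℓ_{i+1/2}(U_{i+1}^n − U_i^n) − ℓ_{i−1/2}(U_i^n − U_{i−1}^n)] = rhs_i with Dirichlet conditions U_0^n = U_{Nmax+1}^n = 0, where rhs_i is the Kelvin-Voigt damping term supported on indices N_α+1,…,N_α+N (with rhs_i = (δ/(2Δt h))·(second differences of U^{n+1} − U^{n−1}) as specified). Define the discrete energy E^n = (1/2)∑_{i=1}^{Nmax} h_i((U_i^{n+1} − U_i^n)/Δt)² + (1/2)∑_{i=0}^{Nmax} ℓ_{i+1/2}(U_{i+1}^{n+1} − U_i^{n+1})(U_{i+1}^n − U_i^n). Then E^n − E^{n−1} = −δ Δt h ∑_{i=N_α+1}^{N_α+N−1} ((U_{i+1}^{n+1} − U_i^{n+1} − U_{i+1}^{n−1} + U_i^{n−1})/(2Δt h))². In particular the discrete energy is non-increasing when δ ≥ 0. -/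
/-!
Multiply the scheme by the centred time difference `(U^{n+1}_i - U^{n-1}_i) / 2` and sum over
the cells. The inertia term telescopes into the kinetic part of the energy, and after a summation
by parts, which the Dirichlet conditions make boundary-free, the stiffness term telescopes into
the staggered potential part. The damping term is the backward difference of a Kelvin-Voigt flux
supported on the damped interfaces, so a second summation by parts turns its contribution into
minus a sum of squares.
-/

open Finset

/-- The right-hand side (Kelvin-Voigt damping term) of the finite volume scheme,
built from the solution at time levels `n+1` (`Up`) and `n-1` (`Um`). -/
noncomputable def rhsKV (δ Δt h : ℝ) (Nα N : ℕ) (Up Um : ℕ → ℝ) (i : ℕ) : ℝ :=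
  if i = Nα + 1 then
    δ / (2 * Δt) * ((Up (i + 1) - Up i) / h - (Um (i + 1) - Um i) / h)
  else if Nα + 2 ≤ i ∧ i ≤ Nα + N - 1 then
    δ / (2 * Δt) * ((Up (i + 1) - Up i) / h - (Um (i + 1) - Um i) / h
      - (Up i - Up (i - 1)) / h + (Um i - Um (i - 1)) / h)
  else if i = Nα + N then
    -(δ / (2 * Δt)) * ((Up i - Up (i - 1)) / h - (Um i - Um (i - 1)) / h)
  else 0

/-- Discrete energy of the explicit finite volume scheme, at time level `n`,
built from the solution at time levels `n` (`Un`) and `n+1` (`Unp`). -/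
noncomputable def energyExp (Δt : ℝ) (hi ℓ : ℕ → ℝ) (Nmax : ℕ) (Un Unp : ℕ → ℝ) : ℝ :=
  (1 / 2) * ∑ i ∈ Icc 1 Nmax, hi i * ((Unp i - Un i) / Δt) ^ 2 +
    (1 / 2) * ∑ i ∈ range (Nmax + 1),
      ℓ i * (Unp (i + 1) - Unp i) * (Un (i + 1) - Un i)

/-- The Kelvin-Voigt flux `δ ∂ₓ∂ₜU` at the interface `i + 1/2`, discretised by a centred
difference in time. -/
noncomputable def kvFlux (δ Δt h : ℝ) (Nα N : ℕ) (Up Um : ℕ → ℝ) (i : ℕ) : ℝ :=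
  if i ∈ Icc (Nα + 1) (Nα + N - 1) then
    δ / (2 * Δt) * ((Up (i + 1) - Up i) / h - (Um (i + 1) - Um i) / h)
  else 0

section SummationByParts

variable {R : Type*} [CommRing R]

theorem sum_range_mul_sub_succ (f w : ℕ → R) (M : ℕ) :
    ∑ i ∈ range (M + 1), f i * (w (i + 1) - w i) =
      f M * w (M + 1) - f 0 * w 0 - ∑ i ∈ Icc 1 M, (f i - f (i - 1)) * w i := by
  induction M with
  | zero => simp only [zero_add, sum_range_one, Icc_eq_empty_of_lt zero_lt_one, sum_empty]; ring
  | succ m ih =>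
    rw [sum_range_succ, ih, sum_Icc_succ_top (by omega : 1 ≤ m + 1), Nat.add_sub_cancel]
    ring

theorem sum_Icc_sub_mul_of_eq_zero {f w : ℕ → R} {M : ℕ} (h₀ : w 0 = 0) (hM : w (M + 1) = 0) :
    ∑ i ∈ Icc 1 M, (f i - f (i - 1)) * w i = -∑ i ∈ range (M + 1), f i * (w (i + 1) - w i) := by
  rw [sum_range_mul_sub_succ, h₀, hM]
  ring

end SummationByParts

theorem energyExp_sub_energyExp {Δt : ℝ} (hΔt : Δt ≠ 0) {hi ℓ : ℕ → ℝ} {Nmax : ℕ}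
    {u₀ u₁ u₂ r : ℕ → ℝ} (h₀ : u₂ 0 = u₀ 0) (hM : u₂ (Nmax + 1) = u₀ (Nmax + 1))
    (hscheme : ∀ i ∈ Icc 1 Nmax,
      hi i * (u₂ i - 2 * u₁ i + u₀ i) / Δt ^ 2 -
        (ℓ i * (u₁ (i + 1) - u₁ i) - ℓ (i - 1) * (u₁ i - u₁ (i - 1))) = r i) :
    energyExp Δt hi ℓ Nmax u₁ u₂ - energyExp Δt hi ℓ Nmax u₀ u₁ =
      ∑ i ∈ Icc 1 Nmax, r i * ((u₂ i - u₀ i) / 2) := by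
  set w : ℕ → ℝ := fun i => (u₂ i - u₀ i) / 2
  set f : ℕ → ℝ := fun i => ℓ i * (u₁ (i + 1) - u₁ i)
  have hflux : ∀ i ∈ Icc 1 Nmax, ℓ (i - 1) * (u₁ i - u₁ (i - 1)) = f (i - 1) := by
    intro i hmem
    simp only [f, Nat.sub_add_cancel (mem_Icc.mp hmem).1]
  have hkinetic : ∀ i, hi i * (u₂ i - 2 * u₁ i + u₀ i) / Δt ^ 2 * w i =
      1 / 2 * (hi i * ((u₂ i - u₁ i) / Δt) ^ 2) - 1 / 2 * (hi i * ((u₁ i - u₀ i) / Δt) ^ 2) := by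
    intro i
    simp only [w]
    field_simp
    ring
  have hpotential : ∀ i, f i * (w (i + 1) - w i) =
      1 / 2 * (ℓ i * (u₂ (i + 1) - u₂ i) * (u₁ (i + 1) - u₁ i)) -
        1 / 2 * (ℓ i * (u₁ (i + 1) - u₁ i) * (u₀ (i + 1) - u₀ i)) := by
    intro i
    simp only [f, w]
    ring
  calc energyExp Δt hi ℓ Nmax u₁ u₂ - energyExp Δt hi ℓ Nmax u₀ u₁
      = ∑ i ∈ Icc 1 Nmax, hi i * (u₂ i - 2 * u₁ i + u₀ i) / Δt ^ 2 * w i +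
          ∑ i ∈ range (Nmax + 1), f i * (w (i + 1) - w i) := by
        simp only [hkinetic, hpotential, sum_sub_distrib, ← mul_sum, energyExp]
        ring
    _ = ∑ i ∈ Icc 1 Nmax, hi i * (u₂ i - 2 * u₁ i + u₀ i) / Δt ^ 2 * w i -
          ∑ i ∈ Icc 1 Nmax, (f i - f (i - 1)) * w i := by
        rw [sum_Icc_sub_mul_of_eq_zero (by simp [w, h₀]) (by simp [w, hM])]
        ring
    _ = ∑ i ∈ Icc 1 Nmax, r i * w i := by
        rw [← sum_sub_distrib]
        refine sum_congr rfl fun i hmem => ?_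
        rw [← hscheme i hmem, hflux i hmem]
        ring

theorem rhsKV_eq_kvFlux_sub {δ Δt h : ℝ} {Nα N : ℕ} (hN : 2 ≤ N) (Up Um : ℕ → ℝ) {i : ℕ}
    (hi : 1 ≤ i) :
    rhsKV δ Δt h Nα N Up Um i =
      kvFlux δ Δt h Nα N Up Um i - kvFlux δ Δt h Nα N Up Um (i - 1) := by
  simp only [rhsKV, kvFlux, mem_Icc, Nat.sub_add_cancel hi]
  split_ifs <;> first | (exfalso; omega) | ring

theorem sum_rhsKV_mul {δ Δt h : ℝ} (hΔt : Δt ≠ 0) (hh : h ≠ 0) {Nmax Nα N : ℕ} (hN : 2 ≤ N)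
    (hsum : Nα + N ≤ Nmax + 1) {Up Um : ℕ → ℝ} (h₀ : Up 0 = Um 0)
    (hM : Up (Nmax + 1) = Um (Nmax + 1)) :
    ∑ i ∈ Icc 1 Nmax, rhsKV δ Δt h Nα N Up Um i * ((Up i - Um i) / 2) =
      -(δ * Δt * h) * ∑ i ∈ Icc (Nα + 1) (Nα + N - 1),
        ((Up (i + 1) - Up i - Um (i + 1) + Um i) / (2 * Δt * h)) ^ 2 := by
  set w : ℕ → ℝ := fun i => (Up i - Um i) / 2
  have hsupport : range (Nmax + 1) ∩ Icc (Nα + 1) (Nα + N - 1) = Icc (Nα + 1) (Nα + N - 1) :=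
    inter_eq_right.mpr fun i hmem => by simp only [mem_Icc, mem_range] at hmem ⊢; omega
  calc ∑ i ∈ Icc 1 Nmax, rhsKV δ Δt h Nα N Up Um i * w i
      = ∑ i ∈ Icc 1 Nmax,
          (kvFlux δ Δt h Nα N Up Um i - kvFlux δ Δt h Nα N Up Um (i - 1)) * w i :=
        sum_congr rfl fun i hmem => by rw [rhsKV_eq_kvFlux_sub hN Up Um (mem_Icc.mp hmem).1]
    _ = -∑ i ∈ range (Nmax + 1), kvFlux δ Δt h Nα N Up Um i * (w (i + 1) - w i) :=
        sum_Icc_sub_mul_of_eq_zero (by simp [w, h₀]) (by simp [w, hM])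
    _ = -∑ i ∈ Icc (Nα + 1) (Nα + N - 1),
          δ / (2 * Δt) * ((Up (i + 1) - Up i) / h - (Um (i + 1) - Um i) / h) *
            (w (i + 1) - w i) := by
        simp only [kvFlux, ite_mul, zero_mul, sum_ite_mem, hsupport]
    _ = _ := by
        rw [mul_sum, ← sum_neg_distrib]
        refine sum_congr rfl fun i _ => ?_
        simp only [w]
        field_simp
        ring

/-- `U n i` is the solution at time level `n` and cell `i`; the scheme is stated at
time level `n+1` (relating levels `n+2`, `n+1`, `n`). -/
theorem explicit_scheme_energy_dissipation_general
    (Nmax Nα N : ℕ) (hNN : 2 ≤ N) (hsum : Nα + N ≤ Nmax)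
    (Δt δ h : ℝ) (hΔt : 0 < Δt) (hδ : 0 ≤ δ) (hh : 0 < h)
    (hi : ℕ → ℝ)
    (ℓ : ℕ → ℝ)
    (U : ℕ → ℕ → ℝ)
    (hbd : ∀ n, U n 0 = 0 ∧ U n (Nmax + 1) = 0)
    (hscheme : ∀ n, ∀ i ∈ Icc 1 Nmax,
      hi i * (U (n + 2) i - 2 * U (n + 1) i + U n i) / Δt ^ 2 -
        (ℓ i * (U (n + 1) (i + 1) - U (n + 1) i) -
          ℓ (i - 1) * (U (n + 1) i - U (n + 1) (i - 1))) =
        rhsKV δ Δt h Nα N (U (n + 2)) (U n) i) :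
    ∀ n,
      energyExp Δt hi ℓ Nmax (U (n + 1)) (U (n + 2)) -
          energyExp Δt hi ℓ Nmax (U n) (U (n + 1)) =
        -(δ * Δt * h) * ∑ i ∈ Icc (Nα + 1) (Nα + N - 1),
          ((U (n + 2) (i + 1) - U (n + 2) i - U n (i + 1) + U n i) /
              (2 * Δt * h)) ^ 2 ∧
      energyExp Δt hi ℓ Nmax (U (n + 1)) (U (n + 2)) ≤
        energyExp Δt hi ℓ Nmax (U n) (U (n + 1)) := by
  intro n
  have hΔt₀ : Δt ≠ 0 := hΔt.ne'
  have h₀ : U (n + 2) 0 = U n 0 := by rw [(hbd (n + 2)).1, (hbd n).1]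
  have hM : U (n + 2) (Nmax + 1) = U n (Nmax + 1) := by rw [(hbd (n + 2)).2, (hbd n).2]
  have henergy := (energyExp_sub_energyExp hΔt₀ h₀ hM (hscheme n)).trans
    (sum_rhsKV_mul hΔt₀ hh.ne' hNN (by omega) h₀ hM)
  refine ⟨henergy, sub_nonpos.mp ?_⟩
  rw [henergy]
  exact mul_nonpos_of_nonpos_of_nonneg (neg_nonpos.mpr (by positivity))
    (sum_nonneg fun i _ => sq_nonneg _)

/-- Dissipation of the discrete energy for the explicit finite volume scheme with
localized Kelvin-Voigt damping: the energy decrement equals the (nonpositive)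
dissipation term, so the discrete energy is non-increasing when `δ ≥ 0`.
`U n i` is the solution at time level `n` and cell `i`; the scheme is stated at
time level `n+1` (relating levels `n+2`, `n+1`, `n`). -/
theorem explicit_scheme_energy_dissipation
    (Nmax Nα N : ℕ) (hNα : 1 ≤ Nα) (hNN : 2 ≤ N) (hsum : Nα + N ≤ Nmax)
    (Δt δ h : ℝ) (hΔt : 0 < Δt) (hδ : 0 ≤ δ) (hh : 0 < h)
    (hi : ℕ → ℝ) (hipos : ∀ i ∈ Icc 1 Nmax, 0 < hi i)
    (ℓ : ℕ → ℝ) (hℓpos : ∀ i ∈ range (Nmax + 1), 0 < ℓ i)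
    (U : ℕ → ℕ → ℝ)
    (hbd : ∀ n, U n 0 = 0 ∧ U n (Nmax + 1) = 0)
    (hscheme : ∀ n, ∀ i ∈ Icc 1 Nmax,
      hi i * (U (n + 2) i - 2 * U (n + 1) i + U n i) / Δt ^ 2 -
        (ℓ i * (U (n + 1) (i + 1) - U (n + 1) i) -
          ℓ (i - 1) * (U (n + 1) i - U (n + 1) (i - 1))) =
        rhsKV δ Δt h Nα N (U (n + 2)) (U n) i) :
    ∀ n,
      energyExp Δt hi ℓ Nmax (U (n + 1)) (U (n + 2)) -
          energyExp Δt hi ℓ Nmax (U n) (U (n + 1)) =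
        -(δ * Δt * h) * ∑ i ∈ Icc (Nα + 1) (Nα + N - 1),
          ((U (n + 2) (i + 1) - U (n + 2) i - U n (i + 1) + U n i) /
              (2 * Δt * h)) ^ 2 ∧
      energyExp Δt hi ℓ Nmax (U (n + 1)) (U (n + 2)) ≤
        energyExp Δt hi ℓ Nmax (U n) (U (n + 1)) :=
  explicit_scheme_energy_dissipation_general Nmax Nα N hNN hsum Δt δ h hΔt hδ hh hi ℓ U hbd hscheme
end

section
/- Let U ∈ H¹(0, L) with U(0) = U(L) = 0, and let the interval (0,L) be partitioned into Nmax cells of uniform width h with cell averages U_i = (1/h) ∫_{K_i} U(x) dx, setting U_0 = U_{Nmax+1} = 0. Then ∑_{i=0}^{Nmax} (U_{i+1} − U_i)²/h ≤ ∫_0^L (U'(x))² dx. -/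
open Finset
open MeasureTheory intervalIntegral

/-!
Extend `U` by zero outside `[0, L]` (as `U (max 0 (min x L))`, using `U 0 = U L = 0`). Then
`Ua 0` and `Ua (Nmax + 1)` are the averages of the extension over two ghost cells, and every
difference of consecutive averages is `(1/h) ∫_{K_i} ∫_x^{x+h} U'(t) dt dx`. Cauchy–Schwarz
in `t` and then in `x` bounds its square, divided by `h`, by
`(1/h) ∫_{K_i} ∫_x^{x+h} U'(t)² dt dx`; summed over the cells, each `t` is counted for a set of
`x` of length at most `h`.
-/

theorem sq_intervalIntegral_le {f : ℝ → ℝ} {a b : ℝ} (hab : a ≤ b)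
    (hf : IntervalIntegrable f volume a b)
    (hf2 : IntervalIntegrable (fun x => f x ^ 2) volume a b) :
    (∫ x in a..b, f x) ^ 2 ≤ (b - a) * ∫ x in a..b, f x ^ 2 := by
  rcases hab.eq_or_lt with rfl | hlt
  · simp
  have jensen : (⨍ x in a..b, f x) ^ 2 ≤ ⨍ x in a..b, f x ^ 2 :=
    even_two.convexOn_pow.map_set_average_le (continuous_pow 2).continuousOn isClosed_univ
      (by simp [(sub_pos.mpr hlt).ne']) (by simp) (by simp) hf.def' hf2.def'
  rw [interval_average_eq_div, interval_average_eq_div, div_pow,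
    div_le_div_iff₀ (by positivity) (sub_pos.mpr hlt)] at jensen
  nlinarith [sub_pos.mpr hlt]

theorem continuous_intervalIntegral_add_right {V : ℝ → ℝ}
    (hV : ∀ a b, IntervalIntegrable V volume a b) (h : ℝ) :
    Continuous fun x => ∫ t in x..x + h, V t := by
  have hW := continuous_primitive hV 0
  exact ((hW.comp (continuous_add_const h)).sub hW).congr fun x =>
    integral_interval_sub_left (hV _ _) (hV _ _)

/-- Fubini-free: for a primitive `W` of `V` the left side telescopes to
`∫_b^{b+h} W - ∫_a^{a+h} W`, and `W` is monotone. -/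
theorem intervalIntegral_intervalIntegral_add_right_le {V : ℝ → ℝ}
    (hV : ∀ a b, IntervalIntegrable V volume a b) (hV0 : ∀ t, 0 ≤ V t) {h : ℝ}
    (hh : 0 ≤ h) (a b : ℝ) :
    ∫ x in a..b, (∫ t in x..x + h, V t) ≤ h * ∫ t in a..b + h, V t := by
  set W : ℝ → ℝ := fun x => ∫ t in a..x, V t
  have hW : Continuous W := continuous_primitive hV a
  have hWi : ∀ x y, IntervalIntegrable W volume x y := hW.intervalIntegrable
  have hW_sub : ∀ x y, W y - W x = ∫ t in x..y, V t := fun x y =>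
    integral_interval_sub_left (hV _ _) (hV _ _)
  have hW_mono : Monotone W := fun x y hxy => by
    rw [← sub_nonneg, hW_sub]
    exact integral_nonneg hxy fun t _ => hV0 t
  have htelescope : ∫ x in a..b, (W (x + h) - W x) =
      (∫ x in b..b + h, W x) - ∫ x in a..a + h, W x := by
    rw [integral_sub (f := fun x => W (x + h))
        ((hW.comp (continuous_add_const h)).intervalIntegrable _ _) (hWi _ _),
      integral_comp_add_right W h,
      ← integral_interval_sub_left (hWi a (b + h)) (hWi a (a + h)),
      ← integral_interval_sub_left (hWi a (b + h)) (hWi a b)]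
    ring
  have hupper : ∫ x in b..b + h, W x ≤ h * W (b + h) := by
    have := integral_mono_on (by linarith) (hWi b (b + h)) intervalIntegrable_const
      fun x hx => hW_mono hx.2
    simpa using this
  have hlower : 0 ≤ ∫ x in a..a + h, W x :=
    integral_nonneg (by linarith) fun x hx => by simpa [W] using hW_mono hx.1
  calc ∫ x in a..b, (∫ t in x..x + h, V t) = ∫ x in a..b, (W (x + h) - W x) := by
        simp_rw [hW_sub]
    _ ≤ h * W (b + h) := by linarith

theorem sq_intervalIntegral_intervalIntegral_add_right_le {g : ℝ → ℝ}
    (hg : ∀ a b, IntervalIntegrable g volume a b)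
    (hg2 : ∀ a b, IntervalIntegrable (fun t => g t ^ 2) volume a b) {h : ℝ} (hh : 0 ≤ h)
    (a : ℝ) :
    (∫ x in a..a + h, ∫ t in x..x + h, g t) ^ 2 ≤
      h ^ 2 * ∫ x in a..a + h, ∫ t in x..x + h, g t ^ 2 := by
  have hD := continuous_intervalIntegral_add_right hg h
  have hΦ := continuous_intervalIntegral_add_right hg2 h
  have hpointwise : ∀ x, (∫ t in x..x + h, g t) ^ 2 ≤ h * ∫ t in x..x + h, g t ^ 2 :=
    fun x => by simpa using sq_intervalIntegral_le (by linarith : x ≤ x + h) (hg _ _) (hg2 _ _)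
  calc (∫ x in a..a + h, ∫ t in x..x + h, g t) ^ 2
      ≤ h * ∫ x in a..a + h, (∫ t in x..x + h, g t) ^ 2 := by
        have := sq_intervalIntegral_le (le_add_of_nonneg_right (a := a) hh)
          (hD.intervalIntegrable _ _) ((hD.pow 2).intervalIntegrable _ _)
        rwa [add_sub_cancel_left] at this
    _ ≤ h * ∫ x in a..a + h, h * ∫ t in x..x + h, g t ^ 2 := by
        gcongr
        exact integral_mono_on (by linarith) ((hD.pow 2).intervalIntegrable _ _)
          ((continuous_const.mul hΦ).intervalIntegrable _ _) fun x _ => hpointwise x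
    _ = h ^ 2 * ∫ x in a..a + h, ∫ t in x..x + h, g t ^ 2 := by
        rw [intervalIntegral.integral_const_mul]; ring

theorem continuous_of_intervalIntegral_eq_sub {g F : ℝ → ℝ}
    (hg : ∀ a b, IntervalIntegrable g volume a b)
    (hF : ∀ a b, ∫ t in a..b, g t = F b - F a) : Continuous F := by
  have hprimitive : F = fun x => F 0 + ∫ t in 0..x, g t := funext fun x => by rw [hF]; ring
  exact hprimitive ▸ continuous_const.add (continuous_primitive hg 0)

noncomputable def cellAverage (F : ℝ → ℝ) (a h : ℝ) (i : ℕ) : ℝ :=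
  (1 / h) * ∫ x in a + i * h..a + (i + 1) * h, F x

theorem cellAverage_succ_sub {F : ℝ → ℝ} (hF : Continuous F) (a h : ℝ) (i : ℕ) :
    cellAverage F a h (i + 1) - cellAverage F a h i =
      (1 / h) * ∫ x in a + i * h..a + (i + 1) * h, (F (x + h) - F x) := by
  have hshift : ∫ x in a + (i + 1 : ℕ) * h..a + ((i + 1 : ℕ) + 1) * h, F x =
      ∫ x in a + i * h..a + (i + 1) * h, F (x + h) := by
    rw [integral_comp_add_right]; push_cast; ring_nf
  rw [cellAverage, cellAverage, hshift, ← mul_sub,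
    ← integral_sub (f := fun x => F (x + h))
      ((hF.comp (continuous_add_const h)).intervalIntegrable _ _) (hF.intervalIntegrable _ _)]

theorem sq_sub_cellAverage_le {g F : ℝ → ℝ} (hg : ∀ a b, IntervalIntegrable g volume a b)
    (hg2 : ∀ a b, IntervalIntegrable (fun t => g t ^ 2) volume a b)
    (hF : ∀ a b, ∫ t in a..b, g t = F b - F a) {h : ℝ} (hh : 0 < h) (a : ℝ) (i : ℕ) :
    (cellAverage F a h (i + 1) - cellAverage F a h i) ^ 2 / h ≤
      (1 / h) * ∫ x in a + i * h..a + (i + 1) * h, ∫ t in x..x + h, g t ^ 2 := by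
  have hcell := sq_intervalIntegral_intervalIntegral_add_right_le hg hg2 hh.le (a + i * h)
  rw [cellAverage_succ_sub (continuous_of_intervalIntegral_eq_sub hg hF)]
  simp_rw [← hF]
  rw [show a + (i + 1 : ℝ) * h = a + i * h + h by ring, mul_pow, div_le_iff₀ hh]
  calc (1 / h) ^ 2 * (∫ x in a + i * h..a + i * h + h, ∫ t in x..x + h, g t) ^ 2
      ≤ (1 / h) ^ 2 *
          (h ^ 2 * ∫ x in a + i * h..a + i * h + h, ∫ t in x..x + h, g t ^ 2) := by
        gcongr
    _ = (1 / h) * (∫ x in a + i * h..a + i * h + h, ∫ t in x..x + h, g t ^ 2) * h := by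
        field_simp

theorem sum_sq_sub_cellAverage_le {g F : ℝ → ℝ} (hg : ∀ a b, IntervalIntegrable g volume a b)
    (hg2 : ∀ a b, IntervalIntegrable (fun t => g t ^ 2) volume a b)
    (hF : ∀ a b, ∫ t in a..b, g t = F b - F a) {h : ℝ} (hh : 0 < h) (a : ℝ) (n : ℕ) :
    ∑ i ∈ range n, (cellAverage F a h (i + 1) - cellAverage F a h i) ^ 2 / h ≤
      ∫ t in a..a + (n + 1) * h, g t ^ 2 := by
  have hΦ := continuous_intervalIntegral_add_right hg2 h
  calc ∑ i ∈ range n, (cellAverage F a h (i + 1) - cellAverage F a h i) ^ 2 / h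
      ≤ ∑ i ∈ range n,
          (1 / h) * ∫ x in a + i * h..a + (i + 1) * h, ∫ t in x..x + h, g t ^ 2 :=
        sum_le_sum fun i _ => sq_sub_cellAverage_le hg hg2 hF hh a i
    _ = (1 / h) * ∫ x in a..a + n * h, ∫ t in x..x + h, g t ^ 2 := by
        rw [← mul_sum]
        congr 1
        have := sum_integral_adjacent_intervals (a := fun i : ℕ => a + i * h) (n := n)
          fun k _ => hΦ.intervalIntegrable (μ := volume) _ _
        simpa using this
    _ ≤ (1 / h) * (h * ∫ t in a..a + n * h + h, g t ^ 2) := by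
        gcongr
        exact intervalIntegral_intervalIntegral_add_right_le hg2 (fun _ => sq_nonneg _) hh.le
          _ _
    _ = ∫ t in a..a + (n + 1) * h, g t ^ 2 := by
        field_simp
        ring_nf

theorem intervalIntegral_indicator_Ioc {f : ℝ → ℝ} {a b c d : ℝ} (hab : a ≤ b)
    (hcd : c ≤ d) (had : a ≤ d) (hcb : c ≤ b) :
    ∫ t in a..b, (Set.Ioc c d).indicator f t = ∫ t in max a c..min b d, f t := by
  rw [integral_of_le hab, integral_of_le (max_le (le_min hab had) (le_min hcb hcd)),
    setIntegral_indicator measurableSet_Ioc, Set.Ioc_inter_Ioc]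

theorem intervalIntegral_indicator_Ioc_eq_sub {U U' : ℝ → ℝ} {L : ℝ} (hL : 0 ≤ L)
    (hderiv : ∀ t ∈ Set.Icc 0 L, HasDerivAt U (U' t) t)
    (hint : IntegrableOn U' (Set.Ioc 0 L)) (a b : ℝ) :
    ∫ t in a..b, (Set.Ioc 0 L).indicator U' t = U (max 0 (min b L)) - U (max 0 (min a L)) := by
  have hint' : ∀ x y, IntervalIntegrable ((Set.Ioc 0 L).indicator U') volume x y := fun x y =>
    ((integrable_indicator_iff measurableSet_Ioc).2 hint).intervalIntegrable
  have hprimitive :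
      ∀ x, ∫ t in 0..x, (Set.Ioc 0 L).indicator U' t = U (max 0 (min x L)) - U 0 := by
    intro x
    rcases le_total 0 x with hx | hx
    · have hxL : 0 ≤ min x L := le_min hx hL
      rw [intervalIntegral_indicator_Ioc hx hL hL hx, max_self, max_eq_right hxL]
      refine integral_eq_sub_of_hasDerivAt (fun t ht => hderiv t ?_) ?_
      · rw [Set.uIcc_of_le hxL] at ht
        exact ⟨ht.1, ht.2.trans (min_le_right x L)⟩
      · exact (intervalIntegrable_iff_integrableOn_Ioc_of_le hxL).2
          (hint.mono_set (Set.Ioc_subset_Ioc_right (min_le_right x L)))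
    · rw [integral_symm, intervalIntegral_indicator_Ioc hx hL (hx.trans hL) le_rfl,
        max_eq_right hx, min_eq_left hL, max_eq_left (min_le_of_left_le hx)]
      simp
  rw [← integral_interval_sub_left (hint' 0 b) (hint' 0 a), hprimitive, hprimitive]
  ring

theorem integrableOn_of_hasDerivAt_of_integrableOn_sq {U U' : ℝ → ℝ} {a b : ℝ}
    (hderiv : ∀ t ∈ Set.Ioc a b, HasDerivAt U (U' t) t)
    (h2 : IntegrableOn (fun t => U' t ^ 2) (Set.Ioc a b)) : IntegrableOn U' (Set.Ioc a b) := by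
  have hmeas : AEStronglyMeasurable U' (volume.restrict (Set.Ioc a b)) :=
    (measurable_deriv U).aestronglyMeasurable.congr
      (ae_restrict_of_forall_mem measurableSet_Ioc fun t ht => (hderiv t ht).deriv)
  exact ((memLp_two_iff_integrable_sq hmeas).2 h2).integrable one_le_two

theorem cellAverage_congr {F G : ℝ → ℝ} {a h : ℝ} {i : ℕ}
    (hFG : Set.EqOn F G (Set.uIcc (a + i * h) (a + (i + 1) * h))) :
    cellAverage F a h i = cellAverage G a h i := by
  rw [cellAverage, cellAverage, integral_congr hFG]

theorem eq_cellAverage_clamp {U : ℝ → ℝ} {L h : ℝ} {N : ℕ} (hh : 0 < h) (hNh : N * h = L)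
    (hU0 : U 0 = 0) (hUL : U L = 0) {Ua : ℕ → ℝ} (hUa0 : Ua 0 = 0) (hUaN : Ua (N + 1) = 0)
    (hUa : ∀ i ∈ Icc 1 N, Ua i = (1 / h) * ∫ t in ((i - 1 : ℕ) * h)..(i * h), U t)
    {i : ℕ} (hi : i ≤ N + 1) :
    Ua i = cellAverage (fun x => U (max 0 (min x L))) (-h) h i := by
  have hcell :
      ∀ x ∈ Set.uIcc (-h + i * h) (-h + (i + 1) * h), (i - 1 : ℝ) * h ≤ x ∧ x ≤ i * h :=
    fun x hx => by
      rw [Set.uIcc_of_le (by nlinarith)] at hx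
      constructor <;> linarith [hx.1, hx.2]
  rcases Nat.eq_zero_or_pos i with rfl | hi1
  · rw [hUa0, cellAverage_congr (G := 0), cellAverage]
    · simp
    · intro x hx
      have hx0 : x ≤ 0 := by simpa using (hcell x hx).2
      simp [max_eq_left (min_le_of_left_le hx0), hU0]
  rcases hi.lt_or_eq with hiN | rfl
  · have hiN : i ≤ N := Nat.lt_succ_iff.mp hiN
    rw [hUa i (mem_Icc.2 ⟨hi1, hiN⟩), cellAverage_congr (G := U), cellAverage]
    · congr 2 <;> push_cast [Nat.cast_sub hi1] <;> ring
    · intro x hx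
      obtain ⟨hx1, hx2⟩ := hcell x hx
      have hxL : x ≤ L := hNh ▸ hx2.trans (by gcongr)
      have hx0 : 0 ≤ x :=
        (mul_nonneg (sub_nonneg.2 (by exact_mod_cast hi1)) hh.le).trans hx1
      simp only [min_eq_left hxL, max_eq_right hx0]
  · rw [hUaN, cellAverage_congr (G := 0), cellAverage]
    · simp
    · intro x hx
      have hLx : L ≤ x := by have := (hcell x hx).1; push_cast at this; nlinarith
      simp [min_eq_right hLx, max_eq_right (hNh ▸ by positivity : (0 : ℝ) ≤ L), hUL]

/-- Discrete H¹ semi-norm estimate for the cell-average projection on a uniform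
mesh: the sum of squared differences of consecutive cell averages divided by the
mesh size is bounded by the L² norm of the derivative.  `Ua i` is the average of
`U` over the cell `K_i = ((i-1)h, ih)` and `Ua 0 = Ua (Nmax+1) = 0`. -/
theorem discrete_H1_seminorm_estimate
    (L : ℝ) (hL : 0 < L) (Nmax : ℕ) (hNmax : 1 ≤ Nmax)
    (h : ℝ) (hh : h = L / Nmax)
    (U U' : ℝ → ℝ)
    (hderiv : ∀ t ∈ Set.Icc (0 : ℝ) L, HasDerivAt U (U' t) t)
    (hU'2 : MeasureTheory.IntegrableOn (fun t => (U' t) ^ 2) (Set.Ioc 0 L))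
    (hU0 : U 0 = 0) (hUL : U L = 0)
    (Ua : ℕ → ℝ) (hUa0 : Ua 0 = 0) (hUaN : Ua (Nmax + 1) = 0)
    (hUa : ∀ i ∈ Icc 1 Nmax,
      Ua i = (1 / h) * ∫ t in ((i - 1 : ℕ) * h)..(i * h), U t) :
    ∑ i ∈ range (Nmax + 1), (Ua (i + 1) - Ua i) ^ 2 / h ≤
      ∫ t in (0 : ℝ)..L, (U' t) ^ 2 := by
  have hh0 : 0 < h := hh ▸ div_pos hL (by exact_mod_cast hNmax)
  have hNh : (Nmax : ℝ) * h = L := by rw [hh]; field_simp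
  set g := (Set.Ioc 0 L).indicator U'
  set F : ℝ → ℝ := fun x => U (max 0 (min x L))
  have hU' : IntegrableOn U' (Set.Ioc 0 L) := integrableOn_of_hasDerivAt_of_integrableOn_sq
    (fun t ht => hderiv t (Set.Ioc_subset_Icc_self ht)) hU'2
  have hg : Integrable g := (integrable_indicator_iff measurableSet_Ioc).2 hU'
  have hg2_eq : (fun t => g t ^ 2) = (Set.Ioc 0 L).indicator fun t => U' t ^ 2 := by
    ext t; by_cases ht : t ∈ Set.Ioc 0 L <;> simp [g, ht]
  have hg2 : Integrable fun t => g t ^ 2 :=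
    hg2_eq ▸ (integrable_indicator_iff measurableSet_Ioc).2 hU'2
  have hcells : ∀ i ≤ Nmax + 1, Ua i = cellAverage F (-h) h i :=
    fun i hi => eq_cellAverage_clamp hh0 hNh hU0 hUL hUa0 hUaN hUa hi
  have hend : -h + ((Nmax + 1 : ℕ) + 1) * h = L + h := by push_cast; linarith
  calc ∑ i ∈ range (Nmax + 1), (Ua (i + 1) - Ua i) ^ 2 / h
      = ∑ i ∈ range (Nmax + 1),
          (cellAverage F (-h) h (i + 1) - cellAverage F (-h) h i) ^ 2 / h :=
        sum_congr rfl fun i hi => by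
          rw [hcells i (by simp at hi; omega), hcells (i + 1) (by simp at hi; omega)]
    _ ≤ ∫ t in -h..L + h, g t ^ 2 := hend ▸ sum_sq_sub_cellAverage_le
          (fun _ _ => hg.intervalIntegrable) (fun _ _ => hg2.intervalIntegrable)
          (intervalIntegral_indicator_Ioc_eq_sub hL.le hderiv hU') hh0 (-h) (Nmax + 1)
    _ = ∫ t in (0 : ℝ)..L, U' t ^ 2 := by
        rw [hg2_eq, intervalIntegral_indicator_Ioc (by linarith) hL.le (by linarith)
          (by linarith), max_eq_right (by linarith), min_eq_right (by linarith)]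
end

section
/- (Discrete Poincaré inequality) Let 0 = x_{1/2} < ... < x_{Nmax+1/2} = L be a mesh with cell widths h_i and let U : {0,...,Nmax+1} → ℝ with U_0 = U_{Nmax+1} = 0. Then ∑_{i=1}^{Nmax} h_i U_i² ≤ L² ∑_{i=0}^{Nmax} (U_{i+1} − U_i)²/h_{i+1/2}, where h_{i+1/2} is the distance between cell centers x_i and x_{i+1} (with x_0 = 0, x_{Nmax+1} = L). -/
/-!
Since `U 0 = 0`, each `U i` is the telescoping sum of the jumps `U (j + 1) - U j` over the dual
cells up to `i`. Cauchy–Schwarz, weighted by the dual cell widths `c (j + 1) - c j`, which sum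
to at most `L`, gives `U i ^ 2 ≤ L * S`, where `S` is the discrete `H¹` semi-norm. Summing
against the primal cell widths, which add up to `L`, gives the bound `L ^ 2 * S`.
-/

open Finset

theorem sq_sum_le_sum_mul_sum_sq_div {ι R : Type*} [Field R] [LinearOrder R]
    [IsStrictOrderedRing R] (s : Finset ι) (a : ι → R) {w : ι → R} (hw : ∀ j ∈ s, 0 < w j) :
    (∑ j ∈ s, a j) ^ 2 ≤ (∑ j ∈ s, w j) * ∑ j ∈ s, a j ^ 2 / w j :=
  sum_sq_le_sum_mul_sum_of_sq_le_mul s (fun j hj => (hw j hj).le)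
    (fun j hj => div_nonneg (sq_nonneg _) (hw j hj).le)
    (fun j hj => (mul_div_cancel₀ _ (hw j hj).ne').ge)

theorem sum_Icc_one_sub_pred {M : Type*} [AddCommGroup M] (f : ℕ → M) (N : ℕ) :
    ∑ i ∈ Icc 1 N, (f i - f (i - 1)) = f N - f 0 := by
  rw [← Ico_add_one_right_eq_Icc, ← zero_add 1, ← sum_Ico_add' (fun i => f i - f (i - 1)),
    ← range_eq_Ico]
  simp only [Nat.add_sub_cancel, sum_range_sub]

theorem sq_le_mul_sum_sq_sub_div {c U : ℕ → ℝ} {i n : ℕ} (hin : i ≤ n)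
    (hc : ∀ j < n, c j < c (j + 1)) (hU : U 0 = 0) :
    U i ^ 2 ≤ (c n - c 0) * ∑ j ∈ range n, (U (j + 1) - U j) ^ 2 / (c (j + 1) - c j) := by
  have hsub : range i ⊆ range n := range_subset_range.2 hin
  have hw : ∀ j ∈ range n, 0 < c (j + 1) - c j := fun j hj => sub_pos.2 (hc j (mem_range.1 hj))
  have hterm : ∀ j ∈ range n, 0 ≤ (U (j + 1) - U j) ^ 2 / (c (j + 1) - c j) :=
    fun j hj => div_nonneg (sq_nonneg _) (hw j hj).le
  calc U i ^ 2 = (∑ j ∈ range i, (U (j + 1) - U j)) ^ 2 := by rw [sum_range_sub, hU, sub_zero]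
    _ ≤ (∑ j ∈ range i, (c (j + 1) - c j)) *
          ∑ j ∈ range i, (U (j + 1) - U j) ^ 2 / (c (j + 1) - c j) :=
        sq_sum_le_sum_mul_sum_sq_div _ _ fun j hj => hw j (hsub hj)
    _ ≤ (∑ j ∈ range n, (c (j + 1) - c j)) *
          ∑ j ∈ range n, (U (j + 1) - U j) ^ 2 / (c (j + 1) - c j) :=
        mul_le_mul (sum_le_sum_of_subset_of_nonneg hsub fun j hj _ => (hw j hj).le)
          (sum_le_sum_of_subset_of_nonneg hsub fun j hj _ => hterm j hj)
          (sum_nonneg fun j hj => hterm j (hsub hj)) (sum_nonneg fun j hj => (hw j hj).le)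
    _ = _ := by rw [sum_range_sub]

theorem center_lt_center_succ {f c : ℕ → ℝ} {N : ℕ} (hN : 1 ≤ N)
    (hf : ∀ i < N, f i < f (i + 1)) (hc0 : c 0 = f 0) (hcN : c (N + 1) = f N)
    (hc : ∀ i ∈ Icc 1 N, c i = (f (i - 1) + f i) / 2) {j : ℕ} (hj : j ≤ N) :
    c j < c (j + 1) := by
  have hc1 := hc 1 (mem_Icc.2 ⟨le_rfl, hN⟩)
  rcases Nat.eq_zero_or_pos j with rfl | hj0
  · rw [hc0, hc1]
    linarith [hf 0 hN]
  have hcj := hc j (mem_Icc.2 ⟨hj0, hj⟩)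
  have hface : f (j - 1) < f j := by simpa [Nat.sub_add_cancel hj0] using hf (j - 1) (by omega)
  have hface_le : f j ≤ c (j + 1) := by
    rcases hj.eq_or_lt with rfl | hjN
    · exact hcN.ge
    · rw [hc (j + 1) (mem_Icc.2 ⟨by omega, hjN⟩), Nat.add_sub_cancel]
      linarith [hf j hjN]
  linarith

-- `f i` is the face `x_{i+1/2}` and `c i` the cell center `x_i`.
theorem discrete_poincare_general
    (L : ℝ) (Nmax : ℕ) (hNmax : 1 ≤ Nmax)
    (f : ℕ → ℝ) (hf0 : f 0 = 0) (hfN : f Nmax = L)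
    (hmono : ∀ i < Nmax, f i < f (i + 1))
    (c : ℕ → ℝ) (hc0 : c 0 = 0) (hcN : c (Nmax + 1) = L)
    (hc : ∀ i ∈ Icc 1 Nmax, c i = (f (i - 1) + f i) / 2)
    (U : ℕ → ℝ) (hU0 : U 0 = 0) :
    ∑ i ∈ Icc 1 Nmax, (f i - f (i - 1)) * (U i) ^ 2 ≤
      L ^ 2 * ∑ i ∈ range (Nmax + 1),
        (U (i + 1) - U i) ^ 2 / (c (i + 1) - c i) := by
  set S := ∑ i ∈ range (Nmax + 1), (U (i + 1) - U i) ^ 2 / (c (i + 1) - c i)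
  have hcenters : ∀ j < Nmax + 1, c j < c (j + 1) := fun j hj =>
    center_lt_center_succ hNmax hmono (hc0.trans hf0.symm) (hcN.trans hfN.symm) hc
      (Nat.lt_succ_iff.1 hj)
  have hpointwise : ∀ i ∈ Icc 1 Nmax, U i ^ 2 ≤ L * S := fun i hi => by
    simpa [hc0, hcN] using
      sq_le_mul_sum_sq_sub_div (U := U) (Nat.le_succ_of_le (mem_Icc.1 hi).2) hcenters hU0
  have hwidth : ∀ i ∈ Icc 1 Nmax, 0 ≤ f i - f (i - 1) := fun i hi => by
    obtain ⟨hi1, hiN⟩ := mem_Icc.1 hi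
    exact sub_nonneg.2 (by simpa [Nat.sub_add_cancel hi1] using (hmono (i - 1) (by omega)).le)
  calc ∑ i ∈ Icc 1 Nmax, (f i - f (i - 1)) * U i ^ 2
      ≤ ∑ i ∈ Icc 1 Nmax, (f i - f (i - 1)) * (L * S) :=
        sum_le_sum fun i hi => mul_le_mul_of_nonneg_left (hpointwise i hi) (hwidth i hi)
    _ = L ^ 2 * S := by rw [← sum_mul, sum_Icc_one_sub_pred, hf0, hfN]; ring

/-- Discrete Poincaré inequality for finite volume grid functions with
homogeneous Dirichlet boundary values on a one-dimensional mesh of total length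
`L`.  `f i` denotes the face `x_{i+1/2}` (so `f 0 = 0`, `f Nmax = L`), `c i` the
cell centers (with `c 0 = 0`, `c (Nmax+1) = L`), and `U` vanishes at the
boundary indices. -/
theorem discrete_poincare
    (L : ℝ) (hL : 0 < L) (Nmax : ℕ) (hNmax : 1 ≤ Nmax)
    (f : ℕ → ℝ) (hf0 : f 0 = 0) (hfN : f Nmax = L)
    (hmono : ∀ i < Nmax, f i < f (i + 1))
    (c : ℕ → ℝ) (hc0 : c 0 = 0) (hcN : c (Nmax + 1) = L)
    (hc : ∀ i ∈ Icc 1 Nmax, c i = (f (i - 1) + f i) / 2)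
    (U : ℕ → ℝ) (hU0 : U 0 = 0) (hUN : U (Nmax + 1) = 0) :
    ∑ i ∈ Icc 1 Nmax, (f i - f (i - 1)) * (U i) ^ 2 ≤
      L ^ 2 * ∑ i ∈ range (Nmax + 1),
        (U (i + 1) - U i) ^ 2 / (c (i + 1) - c i) :=
  discrete_poincare_general L Nmax hNmax f hf0 hfN hmono c hc0 hcN hc U hU0
end
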